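/- Let k > 2 be an integer and let F ∈ ℝ⟦x⟧ be a formal power series in one variable such that F − x^k has order ≥ k + 1. Then there exists a unique pair (h, F*) with h ∈ ℝ and F* ∈ ℝ⟦x⟧ such that F* − x^k has order ≥ k + 1, the coefficient of x^{2k−1} in F* is 0, and F*(x − h·F(x)) = F(x), where F*(x − h·F(x)) denotes composition of formal power series (the inner series x − h·F(x) has zero constant term, so the composition is defined). Moreover h = −(1/k)·(coefficient of x^{2k−1} in F). -/

import Mathlib

/-!
Put `u_h = X - h • F`. Since `F ≡ X^k mod X^(k+1)` and `k ≥ 2`, `u_h ≡ X mod X²`, so substitution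
by `u_h` is invertible (via Mathlib's compositional inverse `substInvOfIsUnit`): for every `h`
there is exactly one `F*` with `F* ∘ u_h = F`, and it is again `≡ X^k mod X^(k+1)`.
Writing `u_h = X + w` with `w ≡ -h X^k mod X^(k+1)`, a first-order expansion modulo `X^(2k)`
gives `f ∘ u_h ≡ f + k X^(k-1) w ≡ f - k h X^(2k-1)` for every `f ≡ X^k mod X^(k+1)`. Hence the
coefficient of `X^(2k-1)` in `F = F* ∘ u_h` is that of `F*` minus `k h`, and it vanishes in `F*`
exactly when `h = -(1/k) [X^(2k-1)] F`.
-/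

noncomputable section

open PowerSeries

/-- Formal substitution of the family `a` into `f`, defined coefficientwise by a `finsum`
(which has the correct value whenever each `a i` has zero constant term). -/
def mSubst {σ τ R : Type*} [CommSemiring R] (a : σ → MvPowerSeries τ R)
    (f : MvPowerSeries σ R) : MvPowerSeries τ R :=
  fun d => finsum fun e : σ →₀ ℕ =>
    MvPowerSeries.coeff e f * MvPowerSeries.coeff d (e.prod fun i n => (a i) ^ n)

/-- Composition of one-variable formal power series (`f ∘ a`), well behaved when `a` has zero
constant term. -/
def pComp {R : Type*} [CommSemiring R] (f a : PowerSeries R) : PowerSeries R :=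
  mSubst (fun _ : Unit => a) f

theorem pow_add_dvd_pow_succ_sub_pow_succ {R : Type*} [CommRing R] {x a b : R} {n : ℕ}
    (ha : x ∣ a) (hb : x ∣ b) (hab : x ^ n ∣ a - b) (m : ℕ) :
    x ^ (n + m) ∣ a ^ (m + 1) - b ^ (m + 1) := by
  rw [← geom_sum₂_mul, pow_add, mul_comm (x ^ n)]
  refine mul_dvd_mul (Finset.dvd_sum fun i hi => ?_) hab
  rw [Nat.add_sub_cancel, ← Nat.add_sub_of_le (Finset.mem_range_succ_iff.mp hi), pow_add,
    Nat.add_sub_cancel_left]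
  exact mul_dvd_mul (pow_dvd_pow_of_dvd ha i) (pow_dvd_pow_of_dvd hb _)

namespace PowerSeries

variable {R : Type*} [CommRing R]

theorem pComp_eq_subst {f a : R⟦X⟧} (ha : HasSubst a) : pComp f a = f.subst a := by
  refine MvPowerSeries.ext fun d => ?_
  rw [subst, MvPowerSeries.coeff_subst ha.const]
  rfl

theorem X_pow_dvd_iff_le_order {n : ℕ} {φ : R⟦X⟧} : X ^ n ∣ φ ↔ (n : ℕ∞) ≤ φ.order := by
  rw [order_eq_emultiplicity_X, pow_dvd_iff_le_emultiplicity]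

theorem HasSubst.of_X_dvd {a : R⟦X⟧} (ha : X ∣ a) : HasSubst a :=
  HasSubst.of_constantCoeff_zero' (X_dvd_iff.mp ha)

theorem X_dvd_of_X_sq_dvd_sub_X {u : R⟦X⟧} (hu : X ^ 2 ∣ u - X) : X ∣ u := by
  simpa using dvd_add ((dvd_pow_self X two_ne_zero).trans hu) (dvd_refl X)

theorem X_sq_dvd_sub_X_iff {u : R⟦X⟧} :
    X ^ 2 ∣ u - X ↔ constantCoeff u = 0 ∧ coeff 1 u = 1 := by
  refine X_pow_dvd_iff.trans ⟨fun h => ⟨by simpa using h 0 two_pos,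
    by simpa [sub_eq_zero] using h 1 one_lt_two⟩, fun ⟨h0, h1⟩ m hm => ?_⟩
  interval_cases m <;> simp [h0, h1]

theorem X_pow_dvd_of_X_pow_succ_dvd_sub_C_mul {f : R⟦X⟧} {c : R} {k : ℕ}
    (h : X ^ (k + 1) ∣ f - C c * X ^ k) : X ^ k ∣ f := by
  simpa using dvd_add ((pow_dvd_pow X k.le_succ).trans h) (dvd_mul_left (X ^ k) (C c))

theorem X_pow_dvd_subst_sub_subst {a b : R⟦X⟧} {n : ℕ} (ha : HasSubst a) (hb : HasSubst b)
    (hab : X ^ n ∣ a - b) (f : R⟦X⟧) : X ^ n ∣ f.subst a - f.subst b := by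
  refine X_pow_dvd_iff.mpr fun m hm => ?_
  rw [map_sub, coeff_subst' ha, coeff_subst' hb, sub_eq_zero]
  refine finsum_congr fun d => congrArg _ ?_
  rw [← sub_eq_zero, ← map_sub]
  exact X_pow_dvd_iff.mp (hab.trans (sub_dvd_pow_sub_pow a b d)) m hm

theorem X_pow_dvd_subst {a f : R⟦X⟧} {n : ℕ} (ha : X ∣ a) (hf : X ^ n ∣ f) :
    X ^ n ∣ f.subst a := by
  obtain ⟨q, rfl⟩ := hf
  have ha' := HasSubst.of_X_dvd ha
  rw [subst_mul ha', subst_pow ha', subst_X ha']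
  exact (pow_dvd_pow_of_dvd ha n).mul_right _

theorem X_pow_add_dvd_subst_sub_self {u p : R⟦X⟧} {m n : ℕ} (hu : X ∣ u) (hun : X ^ n ∣ u - X)
    (hp : X ^ (m + 1) ∣ p) : X ^ (m + n) ∣ p.subst u - p := by
  obtain ⟨q, rfl⟩ := hp
  have hu' := HasSubst.of_X_dvd hu
  have hq : X ^ n ∣ q.subst u - q := by
    simpa only [X_subst] using X_pow_dvd_subst_sub_subst hu' HasSubst.X' hun q
  rw [subst_mul hu', subst_pow hu', subst_X hu',
    show u ^ (m + 1) * q.subst u - X ^ (m + 1) * q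
      = (u ^ (m + 1) - X ^ (m + 1)) * q.subst u + X ^ (m + 1) * (q.subst u - q) by ring]
  have hpow : X ^ (m + n) ∣ u ^ (m + 1) - X ^ (m + 1) :=
    add_comm n m ▸ pow_add_dvd_pow_succ_sub_pow_succ hu dvd_rfl hun m
  refine dvd_add (hpow.mul_right _) ?_
  rw [pow_add, pow_succ, mul_assoc]
  exact mul_dvd_mul_left _ (dvd_mul_of_dvd_right hq _)

theorem X_pow_dvd_subst_X_add_sub {k : ℕ} (hk : 1 ≤ k) {f w : R⟦X⟧} {c : R}
    (hf : X ^ (k + 1) ∣ f - X ^ k) (hw : X ^ (k + 1) ∣ w - C c * X ^ k) :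
    X ^ (2 * k) ∣ (f.subst (X + w) - f) - C (k * c) * X ^ (2 * k - 1) := by
  have hwk : X ^ k ∣ w := X_pow_dvd_of_X_pow_succ_dvd_sub_C_mul hw
  have hu : X ∣ X + w := dvd_add dvd_rfl ((dvd_pow_self X (by omega)).trans hwk)
  have hu' := HasSubst.of_X_dvd hu
  have hsubst : f.subst (X + w) = (f - X ^ k).subst (X + w) + (X + w) ^ k := by
    rw [subst_sub hu', subst_pow hu', subst_X hu', sub_add_cancel]
  obtain ⟨j, rfl⟩ : ∃ j, k = j + 1 := ⟨k - 1, by omega⟩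
  have hdecomp : f.subst (X + w) - f - C (↑(j + 1) * c) * X ^ (2 * (j + 1) - 1)
      = ((f - X ^ (j + 1)).subst (X + w) - (f - X ^ (j + 1)))
        + ((X + w) ^ (j + 1) - X ^ (j + 1 - 1) * w * ((j + 1 : ℕ) : R⟦X⟧) - X ^ (j + 1))
        + X ^ j * ((j + 1 : ℕ) : R⟦X⟧) * (w - C c * X ^ (j + 1)) := by
    rw [hsubst, show 2 * (j + 1) - 1 = j + (j + 1) by omega, map_mul, map_natCast,
      Nat.add_sub_cancel, pow_add]
    ring
  rw [hdecomp]
  refine dvd_add (dvd_add ?_ ?_) ?_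
  · simpa only [two_mul] using X_pow_add_dvd_subst_sub_self hu (by rwa [add_sub_cancel_left]) hf
  · rw [mul_comm, pow_mul]
    exact (pow_dvd_pow_of_dvd hwk 2).trans (sq_dvd_add_pow_sub_sub w X (j + 1))
  · rw [show 2 * (j + 1) = j + (j + 1 + 1) by ring, pow_add]
    exact mul_dvd_mul (dvd_mul_right _ _) hw

theorem coeff_subst_X_sub_C_mul {k : ℕ} (hk : 1 ≤ k) {F f : R⟦X⟧}
    (hF : X ^ (k + 1) ∣ F - X ^ k) (hf : X ^ (k + 1) ∣ f - X ^ k) (h : R) :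
    coeff (2 * k - 1) (f.subst (X - C h * F)) = coeff (2 * k - 1) f - k * h := by
  have hw : X ^ (k + 1) ∣ -(C h * F) - C (-h) * X ^ k := by
    rw [map_neg, neg_mul, ← neg_sub', ← mul_sub]
    exact (hF.mul_left _).neg_right
  have hcong := X_pow_dvd_subst_X_add_sub hk hf hw
  rw [← sub_eq_add_neg] at hcong
  have hcoeff := X_pow_dvd_iff.mp hcong (2 * k - 1) (by omega)
  rw [map_sub, map_sub, coeff_C_mul_X_pow, if_pos rfl] at hcoeff
  linear_combination hcoeff

theorem coeff_eq_zero_iff_of_subst_X_sub_C_mul_eq {k : ℕ} (hk : 1 ≤ k) {F f : R⟦X⟧} {h : R}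
    (hF : X ^ (k + 1) ∣ F - X ^ k) (hf : X ^ (k + 1) ∣ f - X ^ k)
    (hfF : f.subst (X - C h * F) = F) :
    coeff (2 * k - 1) f = 0 ↔ k * h = -coeff (2 * k - 1) F := by
  have hcoeff := coeff_subst_X_sub_C_mul hk hF hf h
  rw [hfF] at hcoeff
  exact ⟨fun h' => by linear_combination hcoeff + h', fun h' => by linear_combination h' - hcoeff⟩

theorem subst_eq_iff_eq_subst_substInvOfIsUnit {u : R⟦X⟧} (hu0 : constantCoeff u = 0)
    (hu1 : IsUnit (coeff 1 u)) {f g : R⟦X⟧} :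
    f.subst u = g ↔ f = g.subst (u.substInvOfIsUnit hu1) := by
  have hu := HasSubst.of_constantCoeff_zero' hu0
  have hv := HasSubst.substInvOfIsUnit u hu1
  constructor
  · rintro rfl
    rw [subst_comp_subst_apply hu hv, subst_substInvOfIsUnit_right u hu0, X_subst]
  · rintro rfl
    rw [subst_comp_subst_apply hv hu, subst_substInvOfIsUnit_left u hu0, X_subst]

theorem X_sq_dvd_substInvOfIsUnit_sub_X {u : R⟦X⟧} (hu : X ^ 2 ∣ u - X)
    (hu1 : IsUnit (coeff 1 u)) : X ^ 2 ∣ u.substInvOfIsUnit hu1 - X := by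
  have hunit : hu1.unit = 1 := Units.ext (X_sq_dvd_sub_X_iff.mp hu).2
  exact X_sq_dvd_sub_X_iff.mpr ⟨constantCoeff_substInvOfIsUnit u hu1, by simp [hunit]⟩

theorem X_pow_succ_dvd_subst_sub_X_pow {v f : R⟦X⟧} {k : ℕ} (hv : X ^ 2 ∣ v - X)
    (hf : X ^ (k + 1) ∣ f - X ^ k) : X ^ (k + 1) ∣ f.subst v - X ^ k := by
  have hvX := X_dvd_of_X_sq_dvd_sub_X hv
  have hv' := HasSubst.of_X_dvd hvX
  have hsplit : f.subst v - X ^ k = (f - X ^ k).subst v + (v ^ k - X ^ k) := by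
    rw [subst_sub hv', subst_pow hv', subst_X hv']
    ring
  rw [hsplit]
  refine dvd_add (X_pow_dvd_subst hvX hf) ?_
  rcases k with _ | j
  · simp
  · simpa only [add_comm 2, add_assoc] using pow_add_dvd_pow_succ_sub_pow_succ hvX dvd_rfl hv j

theorem existsUnique_subst_eq {u : R⟦X⟧} (hu : X ^ 2 ∣ u - X) (g : R⟦X⟧) :
    ∃! f : R⟦X⟧, f.subst u = g := by
  obtain ⟨hu0, hu1⟩ := X_sq_dvd_sub_X_iff.mp hu
  have hunit : IsUnit (coeff 1 u) := hu1 ▸ isUnit_one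
  exact ⟨_, (subst_eq_iff_eq_subst_substInvOfIsUnit hu0 hunit).mpr rfl,
    fun f => (subst_eq_iff_eq_subst_substInvOfIsUnit hu0 hunit).mp⟩

theorem X_pow_succ_dvd_sub_X_pow_of_subst_eq {u f g : R⟦X⟧} {k : ℕ} (hu : X ^ 2 ∣ u - X)
    (hfg : f.subst u = g) (hg : X ^ (k + 1) ∣ g - X ^ k) : X ^ (k + 1) ∣ f - X ^ k := by
  obtain ⟨hu0, hu1⟩ := X_sq_dvd_sub_X_iff.mp hu
  have hunit : IsUnit (coeff 1 u) := hu1 ▸ isUnit_one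
  rw [(subst_eq_iff_eq_subst_substInvOfIsUnit hu0 hunit).mp hfg]
  exact X_pow_succ_dvd_subst_sub_X_pow (X_sq_dvd_substInvOfIsUnit_sub_X hu hunit) hg

theorem X_sq_dvd_X_sub_C_mul_sub_X {k : ℕ} (hk : 2 ≤ k) {F : R⟦X⟧}
    (hF : X ^ (k + 1) ∣ F - X ^ k) (h : R) : X ^ 2 ∣ (X - C h * F) - X := by
  rw [sub_sub_cancel_left]
  refine ((pow_dvd_pow X hk).trans (Dvd.dvd.mul_left ?_ _)).neg_right
  exact X_pow_dvd_of_X_pow_succ_dvd_sub_C_mul (c := 1) (by rwa [map_one, one_mul])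

end PowerSeries

/-- first step in the proof of Proposition 5.1, formal version: for a formal
series `F = x^k + O(x^{k+1})` there is a unique pair `(h, F*)` with `F* = x^k + O(x^{k+1})`,
vanishing coefficient of `x^{2k-1}` in `F*`, and `F*(x - h·F(x)) = F(x)`; moreover
`h = -(1/k)·(coefficient of x^{2k-1} in F)`. -/
theorem tube_normalization_one_variable (k : ℕ) (hk : 2 < k) (F : PowerSeries ℝ)
    (hF : (k + 1 : ℕ∞) ≤ (F - (PowerSeries.X : PowerSeries ℝ) ^ k).order) :
    (∃! p : ℝ × PowerSeries ℝ,
        (k + 1 : ℕ∞) ≤ (p.2 - (PowerSeries.X : PowerSeries ℝ) ^ k).order ∧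
        PowerSeries.coeff (2 * k - 1) p.2 = 0 ∧
        pComp p.2 (PowerSeries.X - PowerSeries.C p.1 * F) = F) ∧
    ∀ p : ℝ × PowerSeries ℝ,
      ((k + 1 : ℕ∞) ≤ (p.2 - (PowerSeries.X : PowerSeries ℝ) ^ k).order ∧
        PowerSeries.coeff (2 * k - 1) p.2 = 0 ∧
        pComp p.2 (PowerSeries.X - PowerSeries.C p.1 * F) = F) →
      p.1 = -(1 / k : ℝ) * PowerSeries.coeff (2 * k - 1) F := by
  rw [← Nat.cast_succ] at hF ⊢
  have hF' : X ^ (k + 1) ∣ F - X ^ k := X_pow_dvd_iff_le_order.mpr hF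
  have hu := X_sq_dvd_X_sub_C_mul_sub_X hk.le hF'
  set h₀ : ℝ := -(1 / k : ℝ) * coeff (2 * k - 1) F with h₀_def
  have hnormal : ∀ p : ℝ × ℝ⟦X⟧,
      (((k + 1 : ℕ) : ℕ∞) ≤ (p.2 - X ^ k).order ∧ coeff (2 * k - 1) p.2 = 0 ∧
        pComp p.2 (X - C p.1 * F) = F) ↔
      (X ^ (k + 1) ∣ p.2 - X ^ k ∧ p.1 = h₀ ∧ p.2.subst (X - C p.1 * F) = F) := by
    rintro ⟨h, f⟩
    have hk0 : (k : ℝ) ≠ 0 := by positivity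
    rw [← X_pow_dvd_iff_le_order,
      pComp_eq_subst (HasSubst.of_X_dvd (X_dvd_of_X_sq_dvd_sub_X (hu h)))]
    have hkh : h = h₀ ↔ (k : ℝ) * h = -coeff (2 * k - 1) F := by
      rw [h₀_def, neg_mul, one_div, ← div_eq_inv_mul, ← neg_div, eq_div_iff hk0, mul_comm]
    exact and_congr_right fun hf => and_congr_left fun hfF =>
      (coeff_eq_zero_iff_of_subst_X_sub_C_mul_eq (by omega) hF' hf hfF).trans hkh.symm
  simp_rw [hnormal]
  refine ⟨?_, fun p hp => hp.2.1⟩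
  obtain ⟨G, hGF, hG_unique⟩ := existsUnique_subst_eq (hu h₀) F
  refine ⟨(h₀, G), ⟨X_pow_succ_dvd_sub_X_pow_of_subst_eq (hu h₀) hGF hF', rfl, hGF⟩, ?_⟩
  rintro ⟨h, f⟩ ⟨-, rfl, hfF⟩
  exact Prod.ext rfl (hG_unique f hfF)
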